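/- arXiv:1309.7220 — 8 statements merged into one kernel-verified Lean document; each statement's English description precedes it below -/
import Mathlib

section
/- Suppose the equation a_1x_1 + ... + a_nx_n = 0 (with nonzero integer coefficients) is r-regular. Then for every positive constant C and every r-coloring of the positive integers, there exist positive integers x_1,...,x_n satisfying a_1x_1 + ... + a_nx_n = 0 and a positive integer d such that all numbers x_i + λd for 1 ≤ i ≤ n and integers λ with |λ| ≤ C (and x_i + λd > 0) have the same color. -/
open Filter

/-- Compactness: if every `r`-coloring of the positive integers admits a monochromatic
positive solution, then there is a uniform bound `m` such that every coloring admits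
such a solution with all entries at most `m`. -/
lemma stmt_2_compact (n r : ℕ) (a : Fin n → ℤ)
    (hreg : ∀ c : ℕ → Fin r, ∃ x : Fin n → ℕ, (∀ i, 0 < x i) ∧
      (∀ i j, c (x i) = c (x j)) ∧ ∑ i, a i * (x i : ℤ) = 0) :
    ∃ m : ℕ, ∀ c : ℕ → Fin r, ∃ x : Fin n → ℕ, (∀ i, 0 < x i ∧ x i ≤ m) ∧
      (∀ i j, c (x i) = c (x j)) ∧ ∑ i, a i * (x i : ℤ) = 0 := by
  by_contra h
  push_neg at h
  choose cm hcm using h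
  rcases Nat.eq_zero_or_pos r with hr | hr
  · subst hr; exact (cm 0 0).elim0
  set U : Ultrafilter ℕ := Filter.hyperfilter ℕ with hU
  have key : ∀ y : ℕ, ∃ v : Fin r, {m | cm m y = v} ∈ U := by
    intro y
    have h1 : (⋃ v ∈ (Set.univ : Set (Fin r)), {m | cm m y = v}) = Set.univ := by
      ext m; simp
    have h2 : (⋃ v ∈ (Set.univ : Set (Fin r)), {m | cm m y = v}) ∈ U := by
      rw [h1]; exact Filter.univ_mem
    rcases (Ultrafilter.finite_biUnion_mem_iff Set.finite_univ).mp h2 with ⟨v, _, hv⟩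
    exact ⟨v, hv⟩
  choose cc hcc using key
  obtain ⟨x, hx, hmono, hsum⟩ := hreg cc
  have hA : {m | ∀ i, x i ≤ m} ∈ U := by
    apply Nat.hyperfilter_le_atTop
    exact Filter.eventually_all.mpr fun i => Filter.eventually_ge_atTop (x i)
  have hB : (⋂ i, {m | cm m (x i) = cc (x i)}) ∈ U := by
    exact Filter.iInter_mem.mpr fun i => hcc (x i)
  obtain ⟨m, hmA, hmB⟩ := Filter.nonempty_of_mem (Filter.inter_mem hA hB)
  simp only [Set.mem_iInter, Set.mem_setOf_eq] at hmB
  refine hcm m x (fun i => ⟨hx i, hmA i⟩) ?_ hsum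
  intro i j
  rw [hmB i, hmB j]
  exact hmono i j

/-- Lemma 1: monochromatic progressions around a monochromatic solution. -/
theorem stmt_2 (n r : ℕ) (a : Fin n → ℤ) (ha : ∀ i, a i ≠ 0)
    (hreg : ∀ c : ℕ → Fin r, ∃ x : Fin n → ℕ, (∀ i, 0 < x i) ∧
      (∀ i j, c (x i) = c (x j)) ∧ ∑ i, a i * (x i : ℤ) = 0)
    (C : ℕ) (hC : 0 < C) (c : ℕ → Fin r) :
    ∃ (x : Fin n → ℕ) (d : ℕ), (∀ i, 0 < x i) ∧ 0 < d ∧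
      (∑ i, a i * (x i : ℤ) = 0) ∧
      ∃ k : Fin r, ∀ (i : Fin n) (l : ℤ), |l| ≤ (C : ℤ) →
        0 < (x i : ℤ) + l * d → c (((x i : ℤ) + l * d).toNat) = k := by
  rcases Nat.eq_zero_or_pos r with hr | hr
  · subst hr; exact (c 0).elim0
  rcases Nat.eq_zero_or_pos n with hn | hn
  · subst hn
    refine ⟨fun i => i.elim0, 1, fun i => i.elim0, one_pos, by simp, ⟨0, hr⟩, fun i => i.elim0⟩
  obtain ⟨m, hm⟩ := stmt_2_compact n r a hreg
  set L := Nat.factorial m with hLdef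
  have hL1 : 1 ≤ L := Nat.factorial_pos m
  obtain ⟨A, hA, b, χ, hχ⟩ := Combinatorics.exists_mono_homothetic_copy
    (Finset.range (2 * C * L + 1)) (fun q => fun y : Fin (m + 1) => c (q * (y : ℕ)))
  set Q := A * (C * L) + b with hQdef
  have hQpos : 0 < Q := by
    have : 0 < A * (C * L) := Nat.mul_pos hA (Nat.mul_pos hC hL1)
    omega
  obtain ⟨y, hy, hmono, hsum⟩ := hm (fun z => c (Q * z))
  -- the common color evaluation: for any s in range, c ((A*s+b) * y i) = χ ⟨y i⟩
  have hcol : ∀ (s : ℕ), s ∈ Finset.range (2 * C * L + 1) → ∀ i : Fin n,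
      c ((A * s + b) * y i) = χ ⟨y i, by have := (hy i).2; omega⟩ := by
    intro s hs i
    have := congrFun (hχ s hs) ⟨y i, by have := (hy i).2; omega⟩
    simpa [smul_eq_mul] using this
  have hQcol : ∀ i : Fin n, c (Q * y i) = χ ⟨y i, by have := (hy i).2; omega⟩ := by
    intro i
    have hmem : C * L ∈ Finset.range (2 * C * L + 1) := by
      simp only [Finset.mem_range]; nlinarith
    simpa [hQdef] using hcol (C * L) hmem i
  set i0 : Fin n := ⟨0, hn⟩
  refine ⟨fun i => Q * y i, A * L, fun i => Nat.mul_pos hQpos (hy i).1,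
    Nat.mul_pos hA hL1, ?_, c (Q * y i0), ?_⟩
  · have : ∑ i, a i * ((Q * y i : ℕ) : ℤ) = (Q : ℤ) * ∑ i, a i * (y i : ℤ) := by
      rw [Finset.mul_sum]
      refine Finset.sum_congr rfl fun i _ => by push_cast; ring
    rw [this, hsum, mul_zero]
  · intro i l hl _
    obtain ⟨hyi1, hyi2⟩ := hy i
    have hdvd : y i ∣ L := Nat.dvd_factorial hyi1 hyi2
    set t := L / y i with htdef
    have ht : y i * t = L := Nat.mul_div_cancel' hdvd
    have ht1 : 1 ≤ t := by
      rcases Nat.eq_zero_or_pos t with h0 | h0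
      · rw [h0, Nat.mul_zero] at ht; omega
      · exact h0
    have htL : t ≤ L := Nat.div_le_self _ _
    have habs := abs_le.mp hl
    have htz' : (t : ℤ) ≤ (L : ℤ) := by exact_mod_cast htL
    have hCt : (C : ℤ) * t ≤ (C : ℤ) * L :=
      mul_le_mul_of_nonneg_left htz' (by positivity)
    have hlt1 : -(C : ℤ) * L ≤ l * t := by
      have h1 : -(C : ℤ) * t ≤ l * t :=
        mul_le_mul_of_nonneg_right (by linarith [habs.1]) (by positivity)
      linarith
    have hlt2 : l * t ≤ (C : ℤ) * L := by
      have h1 : l * t ≤ (C : ℤ) * t :=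
        mul_le_mul_of_nonneg_right habs.2 (by positivity)
      linarith
    set s : ℤ := (C : ℤ) * L + l * t with hsdef
    have hs0 : 0 ≤ s := by simp only [hsdef]; linarith
    have hs2 : s ≤ 2 * C * L := by simp only [hsdef]; push_cast; linarith
    set sn := s.toNat with hsndef
    have hsn : (sn : ℤ) = s := Int.toNat_of_nonneg hs0
    have hsnmem : sn ∈ Finset.range (2 * C * L + 1) := by
      simp only [Finset.mem_range]
      have : (sn : ℤ) ≤ 2 * C * L := by rw [hsn]; exact hs2
      exact_mod_cast Nat.lt_succ_of_le (by exact_mod_cast this)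
    have hkey : ((Q * y i : ℕ) : ℤ) + l * ((A * L : ℕ) : ℤ) = (((A * sn + b) * y i : ℕ) : ℤ) := by
      push_cast
      rw [hsn, hsdef, hQdef]
      have htz : (y i : ℤ) * t = L := by exact_mod_cast ht
      push_cast
      linear_combination (-(A : ℤ) * l) * htz
    rw [hkey, Int.toNat_natCast]
    rw [hcol sn hsnmem i, ← hQcol i]
    exact hmono i i0
end

section
/- Let a_1,...,a_n be nonzero rationals and, for 1 ≤ j ≤ k, let (A_{j,1},...,A_{j,n}) be integer vectors none of which is a rational multiple of (a_1,...,a_n). Then for any rationals b_1,...,b_k, there exist integers λ_1,...,λ_n with a_1λ_1 + ... + a_nλ_n = 0 and A_{j,1}λ_1 + ... + A_{j,n}λ_n ≠ b_j for every j with 1 ≤ j ≤ k. -/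
/-!
Over an infinite field a vector space is not a finite union of proper subspaces. Inside the
hyperplane `a ⬝ᵥ x = 0`, each `A j ⬝ᵥ x = 0` cuts out a proper subspace because `A j` is not
proportional to `a`, so some rational `x` solves the equation with every `A j ⬝ᵥ x ≠ 0`.
Clearing denominators makes `x` integral, and a suitable integer multiple of it then avoids
the finitely many values `b j`.
-/

open Module Submodule

theorem Module.Dual.exists_apply_eq_zero_forall_apply_ne_zero {K V ι : Type*} [Field K]
    [Infinite K] [AddCommGroup V] [Module K V] [Finite ι] {f : Dual K V} {g : ι → Dual K V}
    (hg : ∀ j, g j ∉ K ∙ f) : ∃ x, f x = 0 ∧ ∀ j, g j x ≠ 0 := by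
  have hproper : ∀ j, LinearMap.ker ((g j).domRestrict (LinearMap.ker f)) ≠ ⊤ := by
    intro j htop
    have hker : LinearMap.ker f ≤ LinearMap.ker (g j) := fun x hx =>
      LinearMap.congr_fun (LinearMap.ker_eq_top.1 htop) ⟨x, hx⟩
    refine hg j ?_
    simpa using mem_span_of_iInf_ker_le_ker (L := fun _ : Unit => f) (by simpa using hker)
  obtain ⟨⟨x, hx⟩, hx'⟩ : ∃ x : LinearMap.ker f, ∀ j, x ∉ LinearMap.ker ((g j).domRestrict _) := by
    by_contra! hcover
    obtain ⟨j, hj⟩ := Subspace.exists_eq_top_of_iUnion_eq_univ (Set.iUnion_eq_univ_iff.2 hcover)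
    exact hproper j hj
  exact ⟨x, hx, fun j => hx' j⟩

theorem Rat.exists_ne_zero_forall_mul_eq_intCast {ι : Type*} [Finite ι] (x : ι → ℚ) :
    ∃ D : ℤ, D ≠ 0 ∧ ∃ z : ι → ℤ, ∀ i, (z i : ℚ) = D * x i := by
  obtain ⟨D, hD⟩ := IsLocalization.exist_integer_multiples_of_finite (nonZeroDivisors ℤ) x
  choose z hz using hD
  exact ⟨D, nonZeroDivisors.coe_ne_zero D, z, fun i => by simpa [zsmul_eq_mul] using hz i⟩

theorem exists_int_mul_ne {K ι : Type*} [Field K] [CharZero K] [Finite ι] {c : ι → K}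
    (hc : ∀ j, c j ≠ 0) (b : ι → K) : ∃ t : ℤ, ∀ j, (t : K) * c j ≠ b j := by
  have hfin : (Int.cast ⁻¹' Set.range fun j => b j / c j : Set ℤ).Finite :=
    (Set.finite_range _).preimage Int.cast_injective.injOn
  obtain ⟨t, ht⟩ := hfin.infinite_compl.nonempty
  exact ⟨t, fun j h => ht ⟨j, ((eq_div_iff (hc j)).2 h).symm⟩⟩

theorem stmt_3_general (n k : ℕ) (a : Fin n → ℚ)
    (A : Fin k → Fin n → ℤ)
    (hA : ∀ j, ¬ ∃ q : ℚ, ∀ i, (A j i : ℚ) = q * a i)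
    (b : Fin k → ℚ) :
    ∃ l : Fin n → ℤ, ∑ i, a i * (l i : ℚ) = 0 ∧
      ∀ j, ∑ i, (A j i : ℚ) * (l i : ℚ) ≠ b j := by
  let e := dotProductEquiv ℚ (Fin n)
  have hA' : ∀ j, e (Int.cast ∘ A j) ∉ ℚ ∙ e a := by
    intro j hj
    obtain ⟨q, hq⟩ := mem_span_singleton.1 hj
    refine hA j ⟨q, fun i => ?_⟩
    have hqa : Int.cast ∘ A j = q • a := e.injective (by rw [map_smul, hq])
    simpa using congrFun hqa i
  obtain ⟨x, hx, hAx⟩ := Module.Dual.exists_apply_eq_zero_forall_apply_ne_zero hA'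
  obtain ⟨D, hD, z, hz⟩ := Rat.exists_ne_zero_forall_mul_eq_intCast x
  obtain ⟨t, ht⟩ := exists_int_mul_ne (c := fun j => D * (Int.cast ∘ A j) ⬝ᵥ x)
    (fun j => mul_ne_zero (Int.cast_ne_zero.2 hD) (hAx j)) b
  have hl : (fun i => ((t • z) i : ℚ)) = ((t * D : ℤ) : ℚ) • x := by
    ext i
    simp only [Pi.smul_apply, smul_eq_mul, Int.cast_mul, hz, mul_assoc]
  refine ⟨t • z, ?_, fun j => ?_⟩
  · change a ⬝ᵥ _ = 0
    rw [hl, dotProduct_smul, smul_eq_mul, show a ⬝ᵥ x = 0 from hx, mul_zero]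
  · change (Int.cast ∘ A j) ⬝ᵥ _ ≠ b j
    rw [hl, dotProduct_smul, smul_eq_mul, Int.cast_mul, mul_assoc]
    exact ht j

/-- An integer solution of a nondegenerate rational linear equation avoiding
finitely many affine hyperplanes, none of which is a multiple of the equation. -/
theorem stmt_3 (n k : ℕ) (a : Fin n → ℚ) (ha : ∀ i, a i ≠ 0)
    (A : Fin k → Fin n → ℤ)
    (hA : ∀ j, ¬ ∃ q : ℚ, ∀ i, (A j i : ℚ) = q * a i)
    (b : Fin k → ℚ) :
    ∃ l : Fin n → ℤ, ∑ i, a i * (l i : ℚ) = 0 ∧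
      ∀ j, ∑ i, (A j i : ℚ) * (l i : ℚ) ≠ b j :=
  stmt_3_general n k a A hA b
end

section
/- Suppose the equation a_1x_1 + ... + a_nx_n = 0 with nonzero integer coefficients is r-regular. Then for any finite collection of integer-coefficient inequalities A_{j,1}x_1 + ... + A_{j,n}x_n ≠ 0 (1 ≤ j ≤ k), where no coefficient vector (A_{j,1},...,A_{j,n}) is a rational multiple of (a_1,...,a_n), every r-coloring of the positive integers admits a monochromatic solution (x_1,...,x_n) satisfying the equation and all k inequalities. -/
open Finset

/-- Ultrafilter pigeonhole: a function into a finite type is constant on a member set. -/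
lemma ultra_pigeon_aux {α : Type*} [Finite α] (U : Ultrafilter ℕ) (g : ℕ → α) :
    ∃ v, {N | g N = v} ∈ U := by
  by_contra h
  push_neg at h
  have h' : ∀ v : α, {N | g N ≠ v} ∈ U := by
    intro v
    have := (Ultrafilter.compl_mem_iff_notMem (s := {N | g N = v})).2 (h v)
    simpa [Set.compl_setOf] using this
  have hI : (⋂ v : α, {N | g N ≠ v}) ∈ U := Filter.iInter_mem.2 h'
  obtain ⟨N, hN⟩ := Ultrafilter.nonempty_of_mem hI
  have := Set.mem_iInter.1 hN (g N)
  exact this rfl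

/-- Finitary form of r-regularity, by compactness. -/
lemma keyFinitary {n r : ℕ} (a : Fin n → ℤ)
    (hreg : ∀ c : ℕ → Fin r, ∃ x : Fin n → ℕ, (∀ i, 0 < x i) ∧
      (∀ i j, c (x i) = c (x j)) ∧ ∑ i, a i * (x i : ℤ) = 0) :
    ∃ N₀ : ℕ, ∀ γ : ℕ → Fin r, ∃ x : Fin n → ℕ, (∀ i, 0 < x i) ∧ (∀ i, x i ≤ N₀) ∧
      (∀ i j, γ (x i) = γ (x j)) ∧ ∑ i, a i * (x i : ℤ) = 0 := by
  by_contra h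
  push_neg at h
  choose γN hγN using h
  set U : Ultrafilter ℕ := Ultrafilter.of Filter.atTop with hU
  have hatTop : ∀ s ∈ Filter.atTop, s ∈ U :=
    fun s hs => Filter.le_def.1 (Ultrafilter.of_le Filter.atTop) s hs
  have hpick : ∀ t, ∃ v, {N | γN N t = v} ∈ U :=
    fun t => ultra_pigeon_aux U (fun N => γN N t)
  choose γstar hγstar using hpick
  obtain ⟨x, hxpos, hxmono, hxsum⟩ := hreg γstar
  have hSi : (⋂ i, {N | γN N (x i) = γstar (x i)}) ∈ U :=
    Filter.iInter_mem.2 (fun i => hγstar (x i))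
  set M := Finset.univ.sup x with hMdef
  have hM : {N | M ≤ N} ∈ U := hatTop _ (Filter.mem_atTop M)
  obtain ⟨N₁, hN₁⟩ := Ultrafilter.nonempty_of_mem (Filter.inter_mem hSi hM)
  obtain ⟨hN1a, hN1b⟩ := hN₁
  refine hγN N₁ x hxpos
    (fun i => le_trans (Finset.le_sup (Finset.mem_univ i)) hN1b) ?_ hxsum
  intro i j
  have hi : γN N₁ (x i) = γstar (x i) := Set.mem_iInter.1 hN1a i
  have hj : γN N₁ (x j) = γstar (x j) := Set.mem_iInter.1 hN1a j
  rw [hi, hj, hxmono i j]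

/-- If B is not a rational multiple of a (with a nowhere zero), some 2×2 minor is nonzero. -/
lemma minors_aux {n : ℕ} (a : Fin n → ℤ) (ha : ∀ i, a i ≠ 0) (i₀ : Fin n) (B : Fin n → ℤ)
    (hB : ¬ ∃ q : ℚ, ∀ i, (B i : ℚ) = q * (a i : ℚ)) :
    ∃ p q, B p * a q ≠ B q * a p := by
  by_contra h
  push_neg at h
  apply hB
  refine ⟨(B i₀ : ℚ) / (a i₀ : ℚ), fun i => ?_⟩
  have h0 : ((a i₀ : ℤ) : ℚ) ≠ 0 := by exact_mod_cast ha i₀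
  have hq : (B i : ℚ) * (a i₀ : ℚ) = (B i₀ : ℚ) * (a i : ℚ) := by exact_mod_cast h i i₀
  field_simp
  linear_combination hq

/-- Avoidance lemma: find κ in the kernel of cc avoiding finitely many hyperplanes. -/
lemma avoid_aux {n k : ℕ} (cc : Fin n → ℤ) (dd : Fin k → Fin n → ℤ)
    (hmin : ∀ j, ∃ p q, dd j p * cc q ≠ dd j q * cc p) (s : Finset (Fin k)) :
    ∃ κ : Fin n → ℤ, (∑ i, cc i * κ i = 0) ∧ ∀ j ∈ s, (∑ i, dd j i * κ i) ≠ 0 := by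
  classical
  induction s using Finset.induction_on with
  | empty => exact ⟨0, by simp, by simp⟩
  | @insert j₀ s hj₀ IH =>
    obtain ⟨κ, hκ0, hκ⟩ := IH
    obtain ⟨p, q, hpq⟩ := hmin j₀
    have hpqne : p ≠ q := by rintro rfl; exact hpq rfl
    set κj : Fin n → ℤ :=
      fun i => (if i = p then cc q else 0) + (if i = q then -(cc p) else 0) with hκjdef
    have sumbasic : ∀ e : Fin n → ℤ, ∑ i, e i * κj i = e p * cc q - e q * cc p := by
      intro e
      simp only [hκjdef, mul_add]
      rw [Finset.sum_add_distrib]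
      have h1 : ∑ i, e i * (if i = p then cc q else 0) = e p * cc q := by
        rw [Finset.sum_eq_single p]
        · simp
        · intro b _ hb; simp [hb]
        · intro hp; exact absurd (Finset.mem_univ p) hp
      have h2 : ∑ i, e i * (if i = q then -(cc p) else 0) = -(e q * cc p) := by
        rw [Finset.sum_eq_single q]
        · simp [mul_comm]
        · intro b _ hb; simp [hb]
        · intro hp; exact absurd (Finset.mem_univ q) hp
      rw [h1, h2]; ring
    set N : ℤ := 1 + ((insert j₀ s).sup (fun j => (∑ i, dd j i * κj i).natAbs) : ℕ) with hNdef
    have hNpos : 0 < N := by positivity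
    refine ⟨fun i => N * κ i + κj i, ?_, ?_⟩
    · have : ∑ i, cc i * (N * κ i + κj i) = N * (∑ i, cc i * κ i) + ∑ i, cc i * κj i := by
        rw [Finset.mul_sum, ← Finset.sum_add_distrib]
        apply Finset.sum_congr rfl
        intro i _; ring
      rw [this, hκ0, sumbasic]; ring
    · intro j hj
      have hsum : ∑ i, dd j i * (N * κ i + κj i)
          = N * (∑ i, dd j i * κ i) + ∑ i, dd j i * κj i := by
        rw [Finset.mul_sum, ← Finset.sum_add_distrib]
        apply Finset.sum_congr rfl
        intro i _; ring
      rw [hsum]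
      set X := ∑ i, dd j i * κ i with hX
      set Y := ∑ i, dd j i * κj i with hY
      have hYle : |Y| ≤ N - 1 := by
        have hj' : (∑ i, dd j i * κj i).natAbs ≤
            (insert j₀ s).sup (fun j => (∑ i, dd j i * κj i).natAbs) :=
          Finset.le_sup (f := fun j => (∑ i, dd j i * κj i).natAbs) hj
        rw [hNdef]
        have : |Y| = ((∑ i, dd j i * κj i).natAbs : ℤ) := by
          rw [hY, Int.abs_eq_natAbs]
        rw [this]
        have := Int.ofNat_le.2 hj'
        omega
      rcases eq_or_ne X 0 with hX0 | hX0
      · -- then j = j₀ (for j ∈ s, X ≠ 0 by IH)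
        rcases Finset.mem_insert.1 hj with rfl | hjs
        · rw [hX0, mul_zero, zero_add, hY, sumbasic]
          exact sub_ne_zero.2 hpq
        · exact absurd hX0 (hκ j hjs)
      · intro hcon
        have hYeq : Y = -(N * X) := by linarith
        have h1 : |Y| = N * |X| := by
          rw [hYeq, abs_neg, abs_mul, abs_of_pos hNpos]
        have h2 : (1 : ℤ) ≤ |X| := Int.one_le_abs (by exact hX0)
        nlinarith [abs_nonneg Y]

/-- Theorem 2 (main result): r-regularity implies strong r-regularity. -/
theorem stmt_4 (n r k : ℕ) (a : Fin n → ℤ) (ha : ∀ i, a i ≠ 0)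
    (hreg : ∀ c : ℕ → Fin r, ∃ x : Fin n → ℕ, (∀ i, 0 < x i) ∧
      (∀ i j, c (x i) = c (x j)) ∧ ∑ i, a i * (x i : ℤ) = 0)
    (A : Fin k → Fin n → ℤ)
    (hA : ∀ j, ¬ ∃ q : ℚ, ∀ i, (A j i : ℚ) = q * (a i : ℚ))
    (c : ℕ → Fin r) :
    ∃ x : Fin n → ℕ, (∀ i, 0 < x i) ∧ (∀ i j, c (x i) = c (x j)) ∧
      ∑ i, a i * (x i : ℤ) = 0 ∧ ∀ j, ∑ i, A j i * (x i : ℤ) ≠ 0 := by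
  classical
  -- edge case k = 0
  rcases Nat.eq_zero_or_pos k with hk | hk
  · subst hk
    obtain ⟨x, h1, h2, h3⟩ := hreg c
    exact ⟨x, h1, h2, h3, fun j => j.elim0⟩
  -- edge case n = 0
  rcases Nat.eq_zero_or_pos n with hn | hn
  · exfalso
    apply hA ⟨0, hk⟩
    subst hn
    exact ⟨0, fun i => i.elim0⟩
  have i₀ : Fin n := ⟨0, hn⟩
  -- finitary regularity
  obtain ⟨N₀, Hfin⟩ := keyFinitary a hreg
  -- kernel avoidance vectors for every candidate pattern
  have Hκ : ∀ σ : Fin n → ℕ, ∃ κ : Fin n → ℤ,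
      ((∀ i, 0 < σ i) ∧ (∑ i, a i * (σ i : ℤ) = 0)) →
        ((∑ i, (a i * (σ i : ℤ)) * κ i = 0) ∧
          ∀ j : Fin k, (∑ i, (A j i * (σ i : ℤ)) * κ i) ≠ 0) := by
    intro σ
    by_cases hv : (∀ i, 0 < σ i) ∧ (∑ i, a i * (σ i : ℤ) = 0)
    · obtain ⟨hpos, _⟩ := hv
      have hmin : ∀ j : Fin k, ∃ p q,
          (A j p * (σ p : ℤ)) * (a q * (σ q : ℤ)) ≠ (A j q * (σ q : ℤ)) * (a p * (σ p : ℤ)) := by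
        intro j
        obtain ⟨p, q, hpq⟩ := minors_aux a ha i₀ (A j) (hA j)
        refine ⟨p, q, fun hcon => hpq ?_⟩
        have hσ : ((σ p : ℤ)) * (σ q : ℤ) ≠ 0 := by
          have h1 : (0:ℤ) < σ p := by exact_mod_cast hpos p
          have h2 : (0:ℤ) < σ q := by exact_mod_cast hpos q
          positivity
        apply mul_right_cancel₀ hσ
        linear_combination hcon
      obtain ⟨κ, h0, hj⟩ := avoid_aux (fun i => a i * (σ i : ℤ))
        (fun j i => A j i * (σ i : ℤ)) hmin Finset.univ
      exact ⟨κ, fun _ => ⟨h0, fun j => hj j (Finset.mem_univ j)⟩⟩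
    · exact ⟨0, fun hv' => absurd hv' hv⟩
  choose κf hκf using Hκ
  obtain ⟨Mf, hMf⟩ : ∃ X : (Fin n → ℕ) → ℕ, X = fun σ => Finset.univ.sup (fun i => (κf σ i).natAbs) := ⟨_, rfl⟩
  obtain ⟨Tb, hTb⟩ : ∃ X : (Fin n → ℕ) → ℕ, X = fun σ => 1 + 2 * k * Mf σ := ⟨_, rfl⟩
  obtain ⟨T, hT⟩ : ∃ X : ℕ, X = Finset.univ.sup (fun f : Fin n → Fin (N₀+1) => Tb (fun i => (f i : ℕ))) := ⟨_, rfl⟩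
  -- van der Waerden on the product (window) coloring
  obtain ⟨Φ, hΦ⟩ : ∃ X : ℕ → (Fin (N₀+1) → Fin r), X = fun w ν => c (w * ν.val) := ⟨_, rfl⟩
  obtain ⟨α, hα, β, C₀, hC⟩ := Combinatorics.exists_mono_homothetic_copy (Finset.Icc 1 T) Φ
  -- the carrier pattern at base point
  obtain ⟨σ, hσpos, hσle, hσmono, hσsum⟩ := Hfin (fun m => c ((α * 1 + β) * m))
  obtain ⟨hκ0, hκj⟩ := hκf σ ⟨hσpos, hσsum⟩
  have hTσ : Tb σ ≤ T := by
    have h := Finset.le_sup (s := Finset.univ)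
      (f := fun f : Fin n → Fin (N₀+1) => Tb (fun i => (f i : ℕ)))
      (Finset.mem_univ (fun i => (⟨σ i, Nat.lt_succ_of_le (hσle i)⟩ : Fin (N₀+1))))
    simpa [← hT] using h
  have hT1 : 1 ≤ T := le_trans (by simp only [hTb]; exact Nat.le_add_right 1 _) hTσ
  -- the mixing exponents
  have hκbound : ∀ i, -(Mf σ : ℤ) ≤ κf σ i ∧ κf σ i ≤ (Mf σ : ℤ) := by
    intro i
    have h1 : (κf σ i).natAbs ≤ Mf σ := by
      rw [hMf]
      exact Finset.le_sup (f := fun i => (κf σ i).natAbs) (Finset.mem_univ i)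
    have h2 : |κf σ i| ≤ (Mf σ : ℤ) := by
      rw [Int.abs_eq_natAbs]; exact_mod_cast h1
    exact abs_le.1 h2
  obtain ⟨T₀, hT₀⟩ : ∃ X : ℕ, X = 1 + k * Mf σ := ⟨_, rfl⟩
  obtain ⟨l, hl⟩ : ∃ X : ℕ → Fin n → ℕ, X = fun (t : ℕ) (i : Fin n) => (((T₀ : ℕ) : ℤ) + (t : ℤ) * κf σ i).toNat := ⟨_, rfl⟩
  have hlfacts : ∀ t, t ≤ k → ∀ i,
      ((l t i : ℕ) : ℤ) = (T₀ : ℤ) + t * κf σ i ∧ 1 ≤ l t i ∧ l t i ≤ T := by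
    intro t ht i
    have hb := hκbound i
    have ht' : (t : ℤ) ≤ (k : ℤ) := by exact_mod_cast ht
    have htn : (0:ℤ) ≤ (t:ℤ) := by positivity
    have hMn : (0:ℤ) ≤ (Mf σ : ℤ) := by positivity
    have hlow : -((k:ℤ) * Mf σ) ≤ (t:ℤ) * κf σ i := by nlinarith [hb.1]
    have hhigh : (t:ℤ) * κf σ i ≤ (k:ℤ) * Mf σ := by nlinarith [hb.2]
    have hge : (1:ℤ) ≤ (T₀ : ℤ) + t * κf σ i := by
      simp only [hT₀]; push_cast; linarith
    have hle2 : (T₀ : ℤ) + t * κf σ i ≤ (Tb σ : ℤ) := by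
      simp only [hT₀, hTb]; push_cast; linarith
    have hle3 : (Tb σ : ℤ) ≤ (T : ℤ) := by exact_mod_cast hTσ
    have hcast : ((l t i : ℕ) : ℤ) = (T₀ : ℤ) + t * κf σ i := by
      simp only [hl]; exact Int.toNat_of_nonneg (by linarith)
    refine ⟨hcast, ?_, ?_⟩
    · have hh : (1:ℤ) ≤ ((l t i : ℕ) : ℤ) := by rw [hcast]; linarith
      exact_mod_cast hh
    · have hh : ((l t i : ℕ) : ℤ) ≤ (T : ℤ) := by rw [hcast]; linarith
      exact_mod_cast hh
  -- constancy of colors along the progression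
  have hconst : ∀ t, t ≤ k → ∀ i,
      c ((α * l t i + β) * σ i) = c ((α * 1 + β) * σ i) := by
    intro t ht i
    obtain ⟨_, h1, h2⟩ := hlfacts t ht i
    have e1 := hC (l t i) (Finset.mem_Icc.2 ⟨h1, h2⟩)
    have e2 := hC 1 (Finset.mem_Icc.2 ⟨le_refl 1, hT1⟩)
    have e3 := congrFun (e1.trans e2.symm) (⟨σ i, Nat.lt_succ_of_le (hσle i)⟩ : Fin (N₀+1))
    rw [hΦ] at e3
    simp only [smul_eq_mul] at e3
    simpa using e3
  -- the candidate solutions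
  obtain ⟨z, hz⟩ : ∃ X : ℕ → Fin n → ℕ, X = fun t i => (α * l t i + β) * σ i := ⟨_, rfl⟩
  have hzsum : ∀ t, t ≤ k → ∀ e : Fin n → ℤ,
      ∑ i, e i * ((z t i : ℕ) : ℤ)
        = ((β : ℤ) + α * T₀) * (∑ i, e i * σ i)
          + ((α : ℤ) * t) * (∑ i, (e i * σ i) * κf σ i) := by
    intro t ht e
    rw [Finset.mul_sum, Finset.mul_sum, ← Finset.sum_add_distrib]
    apply Finset.sum_congr rfl
    intro i _
    have hc := (hlfacts t ht i).1
    simp only [hz]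
    push_cast
    rw [hc]
    ring
  -- affine data for the dodging
  obtain ⟨Cq, hCq⟩ : ∃ X : Fin k → ℤ, X = fun j => ((β : ℤ) + α * T₀) * (∑ i, A j i * (σ i : ℤ)) := ⟨_, rfl⟩
  obtain ⟨E, hE⟩ : ∃ X : Fin k → ℤ, X = fun j => (α : ℤ) * (∑ i, (A j i * (σ i : ℤ)) * κf σ i) := ⟨_, rfl⟩
  have hEne : ∀ j, E j ≠ 0 := by
    intro j
    simp only [hE]
    exact mul_ne_zero (by exact_mod_cast hα.ne') (hκj j)
  have hval : ∀ t, t ≤ k → ∀ j, ∑ i, A j i * ((z t i : ℕ) : ℤ) = Cq j + t * E j := by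
    intro t ht j
    rw [hzsum t ht (A j)]
    simp only [hCq, hE]
    ring
  -- pigeonhole choice of t
  obtain ⟨F, hF⟩ : ∃ X : Fin k → ℕ, X = fun j => if h : ∃ t : ℕ, Cq j + (t : ℤ) * E j = 0 then h.choose else k + 1 := ⟨_, rfl⟩
  have himg : ∃ t ∈ Finset.range (k+1), t ∉ Finset.image F Finset.univ := by
    by_contra hcon
    push_neg at hcon
    have hsub : Finset.range (k+1) ⊆ Finset.image F Finset.univ := fun t ht => hcon t ht
    have h1 := Finset.card_le_card hsub
    have h2 := Finset.card_image_le (s := (Finset.univ : Finset (Fin k))) (f := F)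
    simp only [Finset.card_range, Finset.card_univ, Fintype.card_fin] at h1 h2
    linarith
  obtain ⟨ts, htmem, htnim⟩ := himg
  have htle : ts ≤ k := Nat.lt_succ_iff.1 (Finset.mem_range.1 htmem)
  refine ⟨z ts, ?_, ?_, ?_, ?_⟩
  · -- positivity
    intro i
    simp only [hz]
    have h1 := (hlfacts ts htle i).2.1
    have h2 : 0 < α * l ts i + β := by
      have h3 : α * 1 ≤ α * l ts i := Nat.mul_le_mul_left α h1
      rw [mul_one] at h3
      have := Nat.lt_of_lt_of_le hα h3
      linarith
    exact Nat.mul_pos h2 (hσpos i)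
  · -- monochromaticity
    intro i j
    simp only [hz]
    rw [hconst ts htle i, hconst ts htle j]
    exact hσmono i j
  · -- the equation
    rw [hzsum ts htle a, hσsum, hκ0]
    ring
  · -- the inequalities
    intro j hcon
    rw [hval ts htle j] at hcon
    have hEx : ∃ t : ℕ, Cq j + (t : ℤ) * E j = 0 := ⟨ts, hcon⟩
    have hspec : Cq j + (hEx.choose : ℤ) * E j = 0 := hEx.choose_spec
    have hFj : F j = hEx.choose := by simp only [hF]; exact dif_pos hEx
    have heq : ((ts : ℤ) - (hEx.choose : ℤ)) * E j = 0 := by linarith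
    have : (ts : ℤ) = (hEx.choose : ℤ) := by
      rcases mul_eq_zero.1 heq with h | h
      · linarith
      · exact absurd h (hEne j)
    have hts : ts = F j := by rw [hFj]; exact_mod_cast this
    exact htnim (Finset.mem_image.2 ⟨j, Finset.mem_univ j, hts.symm⟩)
end

section
/- Suppose the equation a_1x_1 + ... + a_nx_n = 0 with nonzero integer coefficients is r-regular. Then every r-coloring of the positive integers admits a monochromatic solution (x_1,...,x_n) to the equation with all x_i pairwise distinct, provided n ≥ 3 and no two coordinates are forced equal by the equation (i.e., for each pair i ≠ j, the vector e_i - e_j is not a rational multiple of (a_1,...,a_n)). -/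
/-!
By compactness, regularity gives a bound `N` such that every colouring has a monochromatic
solution with entries at most `N`. Applying this to the colourings `m ↦ c (α * m)` and colouring
`α` by the solution obtained together with its colour, van der Waerden's theorem yields a solution
`w` and a progression `d * s + e`, `1 ≤ s ≤ L`, along which all `(d * s + e) * w i` share one
colour. Hence `x i = (d * s i + e) * w i` is a monochromatic solution as soon as
`∑ i, a i * w i * s i = 0`. These `s` are parametrised by a rank `n - 1` lattice, on which each
coincidence `x i = x k` with `i ≠ k` is a proper affine hyperplane when `n ≥ 3`; counting points
of a box of side `n²` gives a parameter avoiding all of them, and `L` depends only on `n`, `a`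
and `N`.
-/

open Finset Fintype Filter Matrix

theorem exists_bound_of_forall_coloring {ι κ : Type*} [Finite ι] [Finite κ]
    (P : (ι → ℕ) → Prop) (h : ∀ c : ℕ → κ, ∃ x, P x ∧ ∀ i j, c (x i) = c (x j)) :
    ∃ N, ∀ c : ℕ → κ, ∃ x, P x ∧ (∀ i j, c (x i) = c (x j)) ∧ ∀ i, x i ≤ N := by
  by_contra! hbad
  choose D hD using hbad
  let U := hyperfilter ℕ
  have hlimit : ∀ m, ∃ k, ∀ᶠ N in U, D N m = k := fun m => by
    obtain ⟨k, hk⟩ := (U.map fun N => D N m).eq_pure_of_finite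
    exact ⟨k, Ultrafilter.mem_map.1 (hk ▸ rfl : {k} ∈ U.map fun N => D N m)⟩
  choose d hd using hlimit
  obtain ⟨x, hx, hmono⟩ := h d
  have hgood : ∀ᶠ N in U, ∀ i, D N (x i) = d (x i) ∧ x i ≤ N :=
    eventually_all.2 fun i => (hd (x i)).and (Nat.hyperfilter_le_atTop (eventually_ge_atTop _))
  obtain ⟨N, hN⟩ := hgood.exists
  obtain ⟨i, hi⟩ := hD N x hx fun i j => by rw [(hN i).1, (hN j).1, hmono]
  exact (hi.trans_le (hN i).2).false

theorem exists_dilated_mono_of_bounded {ι κ : Type*} [Finite ι] [Finite κ]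
    (P : (ι → ℕ) → Prop) {N : ℕ}
    (hN : ∀ c : ℕ → κ, ∃ x, P x ∧ (∀ i j, c (x i) = c (x j)) ∧ ∀ i, x i ≤ N)
    (S : Finset ℕ) (c : ℕ → κ) :
    ∃ w, P w ∧ (∀ i, w i ≤ N) ∧ ∃ d > 0, ∃ e, ∀ s ∈ S, ∀ s' ∈ S, ∀ i j,
      c ((d * s + e) * w i) = c ((d * s' + e) * w j) := by
  choose X hXP hXmono hXN using fun α => hN fun m => c (α * m)
  let F : ℕ → (ι → Fin (N + 1)) × (ι → κ) := fun α =>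
    (fun i => ⟨X α i, Nat.lt_succ_of_le (hXN α i)⟩, fun i => c (α * X α i))
  -- Through `0 ∈ insert 0 S` the start `e` is itself a term, and `X e` serves as `w`.
  obtain ⟨d, hd, e, col, hcol⟩ := Combinatorics.exists_mono_homothetic_copy (insert 0 S) F
  have hF : ∀ s ∈ S, F (d * s + e) = F e := fun s hs => by
    simpa using (hcol s (mem_insert_of_mem hs)).trans (hcol 0 (mem_insert_self 0 S)).symm
  have hX : ∀ s ∈ S, X (d * s + e) = X e := fun s hs => funext fun i =>
    congrArg Fin.val (congrFun (congrArg Prod.fst (hF s hs)) i)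
  have hc : ∀ s ∈ S, ∀ i, c ((d * s + e) * X e i) = c (e * X e i) := fun s hs i => by
    simpa [F, hX s hs] using congrFun (congrArg Prod.snd (hF s hs)) i
  refine ⟨X e, hXP e, hXN e, d, hd, e, fun s hs s' hs' i j => ?_⟩
  rw [hc s hs, hc s' hs', hXmono]

section GenericPoint

variable {ι R : Type*} [Fintype ι] [DecidableEq ι] [CommRing R] [IsDomain R] [DecidableEq R]

theorem card_filter_dotProduct_add_eq_zero_mul_le (S : Finset R) {v : ι → R} (hv : v ≠ 0)
    (C : R) :
    #{x ∈ piFinset fun _ => S | v ⬝ᵥ x + C = 0} * #S ≤ #S ^ card ι := by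
  obtain ⟨j, hj⟩ := Function.ne_iff.1 hv
  have hbox : #(piFinset fun _ : ι => S) = #S ^ card ι := by simp
  rw [← card_product, ← hbox]
  refine card_le_card_of_injOn (fun xy => Function.update xy.1 j xy.2) ?_ ?_
  · intro xy hxy
    simp only [coe_product, Set.mem_prod, coe_filter, mem_piFinset, Set.mem_ofPred_eq,
      mem_coe] at hxy ⊢
    intro k
    rcases eq_or_ne k j with rfl | hk
    · simpa using hxy.2
    · simpa [hk] using hxy.1.1 k
  · rintro ⟨x, y⟩ hxy ⟨x', y'⟩ hxy' heq
    simp only [coe_product, Set.mem_prod, coe_filter, mem_piFinset, Set.mem_ofPred_eq,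
      mem_coe] at hxy hxy' heq
    have hy : y = y' := by simpa using congrFun heq j
    have hoff : ∀ k ≠ j, x k = x' k := fun k hk => by
      simpa [hk] using congrFun heq k
    have hsub : x - x' = Pi.single j (x j - x' j) := by
      ext k
      rcases eq_or_ne k j with rfl | hk
      · simp
      · simp [hk, hoff k hk]
    have hdot : v j * (x j - x' j) = 0 := by
      rw [← dotProduct_single, ← hsub, dotProduct_sub]
      linear_combination hxy.1.2 - hxy'.1.2
    have hxj : x j = x' j := sub_eq_zero.1 ((mul_eq_zero.1 hdot).resolve_left hj)
    have hx : x = x' := by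
      ext k
      rcases eq_or_ne k j with rfl | hk
      exacts [hxj, hoff k hk]
    rw [hx, hy]

theorem exists_mem_piFinset_forall_dotProduct_add_ne_zero {κ : Type*} (S : Finset R)
    (Q : Finset κ) (v : κ → ι → R) (C : κ → R) (hv : ∀ q ∈ Q, v q ≠ 0) (hQ : #Q < #S) :
    ∃ x ∈ piFinset fun _ => S, ∀ q ∈ Q, v q ⬝ᵥ x + C q ≠ 0 := by
  by_contra! hcover
  have hsub : (piFinset fun _ : ι => S) ⊆ Q.biUnion fun q =>
      {x ∈ piFinset fun _ => S | v q ⬝ᵥ x + C q = 0} := fun x hx => by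
    obtain ⟨q, hq, hxq⟩ := hcover x hx
    exact mem_biUnion.2 ⟨q, hq, mem_filter.2 ⟨hx, hxq⟩⟩
  have hS : 0 < #S := (Nat.zero_le _).trans_lt hQ
  have hlt : #S ^ card ι * #S < #S ^ card ι * #S := calc
    #S ^ card ι * #S
      ≤ #(Q.biUnion fun q => {x ∈ piFinset fun _ => S | v q ⬝ᵥ x + C q = 0}) * #S := by
        gcongr; simpa using card_le_card hsub
    _ ≤ (∑ q ∈ Q, #{x ∈ piFinset fun _ => S | v q ⬝ᵥ x + C q = 0}) * #S := by
        gcongr; exact card_biUnion_le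
    _ ≤ #Q * #S ^ card ι := by
        rw [sum_mul]
        exact sum_le_card_nsmul _ _ _ fun q hq =>
          card_filter_dotProduct_add_eq_zero_mul_le S (hv q hq) (C q)
    _ < #S ^ card ι * #S := by rw [mul_comm]; gcongr
  exact lt_irrefl _ hlt

end GenericPoint

section KerMatrix

variable {p : ℕ} {R : Type*}

def kerMatrix [Ring R] (γ : Fin (p + 1) → R) : Matrix (Fin (p + 1)) (Fin p) R :=
  Matrix.of fun i j =>
    if i = j.castSucc then γ (Fin.last p) else if i = Fin.last p then -γ j.castSucc else 0

@[simp] lemma kerMatrix_castSucc [Ring R] (γ : Fin (p + 1) → R) (i j : Fin p) :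
    kerMatrix γ i.castSucc j = if i = j then γ (Fin.last p) else 0 := by
  simp [kerMatrix, Fin.castSucc_ne_last]

@[simp] lemma kerMatrix_last [Ring R] (γ : Fin (p + 1) → R) (j : Fin p) :
    kerMatrix γ (Fin.last p) j = -γ j.castSucc := by
  simp [kerMatrix, (Fin.castSucc_ne_last j).symm]

lemma vecMul_kerMatrix [CommRing R] (γ : Fin (p + 1) → R) : γ ᵥ* kerMatrix γ = 0 := by
  ext j
  simp [vecMul, dotProduct, Fin.sum_univ_castSucc, mul_comm]

lemma abs_kerMatrix_le [Ring R] [LinearOrder R] [IsOrderedRing R] {γ : Fin (p + 1) → R} {G : R}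
    (hG : ∀ i, |γ i| ≤ G) (i : Fin (p + 1)) (j : Fin p) : |kerMatrix γ i j| ≤ G := by
  cases i using Fin.lastCases with
  | last => simpa using hG _
  | cast i =>
    simp only [kerMatrix_castSucc]
    split_ifs
    exacts [hG _, by simpa using (abs_nonneg _).trans (hG 0)]

lemma smul_kerMatrix_row_ne [CommRing R] [IsDomain R] (hp : 2 ≤ p) {γ : Fin (p + 1) → R}
    (hγ : ∀ i, γ i ≠ 0) {w : Fin (p + 1) → R} (hw : ∀ i, w i ≠ 0) {i k : Fin (p + 1)}
    (hik : i ≠ k) :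
    w i • kerMatrix γ i ≠ w k • kerMatrix γ k := by
  wlog hi : i ≠ Fin.last p generalizing i k
  · exact (this hik.symm (by rintro rfl; exact hik (not_not.1 hi))).symm
  obtain ⟨i, rfl⟩ := Fin.exists_castSucc_eq.2 hi
  cases k using Fin.lastCases with
  | last =>
    have : Nontrivial (Fin p) := Fin.nontrivial_iff_two_le.2 hp
    obtain ⟨j, hj⟩ := exists_ne i
    refine fun h => ?_
    have := congrFun h j
    simp [hj.symm, hw, hγ] at this
  | cast k =>
    have hik : i ≠ k := fun h => hik (h ▸ rfl)
    refine fun h => ?_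
    have := congrFun h i
    simp [hik.symm, hw, hγ] at this

end KerMatrix

lemma abs_dotProduct_le {ι R : Type*} [Fintype ι] [Ring R] [LinearOrder R]
    [IsOrderedRing R] {u v : ι → R} {A B : R} (hu : ∀ i, |u i| ≤ A) (hv : ∀ i, |v i| ≤ B) :
    |u ⬝ᵥ v| ≤ card ι * (A * B) := calc
  |u ⬝ᵥ v| ≤ ∑ i, |u i * v i| := abs_sum_le_sum_abs _ _
  _ ≤ ∑ _i : ι, A * B := sum_le_sum fun i _ => by
    rw [abs_mul]
    exact mul_le_mul (hu i) (hv i) (abs_nonneg _) ((abs_nonneg _).trans (hu i))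
  _ = card ι * (A * B) := by simp

theorem exists_solution_injective_dilation {p : ℕ} (hp : 2 ≤ p) {γ : Fin (p + 1) → ℤ}
    (hγ : ∀ i, γ i ≠ 0) (hsum : ∑ i, γ i = 0) {G : ℕ} (hG : ∀ i, |γ i| ≤ G)
    {w : Fin (p + 1) → ℕ} (hw : ∀ i, 0 < w i) {d : ℕ} (hd : 0 < d) (e : ℕ) :
    ∃ s : Fin (p + 1) → ℕ, (∀ i, s i ∈ Icc 1 (2 * (p * (G * (p + 1) ^ 2)) + 1)) ∧
      ∑ i, γ i * s i = 0 ∧ Function.Injective fun i => (d * s i + e) * w i := by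
  set M := (p + 1) ^ 2
  set B : ℤ := p * (G * M)
  set U := kerMatrix γ
  -- For `q = (i, k)` and `t = B + 1 + U *ᵥ x`:
  -- `v q ⬝ᵥ x + C q = (d * t i + e) * w i - (d * t k + e) * w k`.
  let v : Fin (p + 1) × Fin (p + 1) → Fin p → ℤ := fun q =>
    (d : ℤ) • ((w q.1 : ℤ) • U q.1 - (w q.2 : ℤ) • U q.2)
  let C : Fin (p + 1) × Fin (p + 1) → ℤ := fun q => (d * (B + 1) + e) * (w q.1 - w q.2)
  have hv : ∀ q ∈ (univ : Finset (Fin (p + 1))).offDiag, v q ≠ 0 := fun q hq =>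
    smul_ne_zero (by exact_mod_cast hd.ne') <| sub_ne_zero.2 <|
      smul_kerMatrix_row_ne hp hγ (w := fun i => (w i : ℤ))
        (fun i => by exact_mod_cast (hw i).ne') (mem_offDiag.1 hq).2.2
  have hQ : #(univ : Finset (Fin (p + 1))).offDiag < #(Icc (0 : ℤ) M) := by
    simp only [offDiag_card, card_univ, Fintype.card_fin, Int.card_Icc, sub_zero,
      Int.toNat_natCast_add_one, M]
    rw [sq]
    omega
  obtain ⟨x, hxbox, hx⟩ := exists_mem_piFinset_forall_dotProduct_add_ne_zero _ _ v C hv hQ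
  have hUx : ∀ i, |(U *ᵥ x) i| ≤ B := fun i => by
    have hxM : ∀ j, |x j| ≤ M := fun j => by
      have := mem_Icc.1 (mem_piFinset.1 hxbox j)
      exact abs_le.2 ⟨by omega, this.2⟩
    have := abs_dotProduct_le (abs_kerMatrix_le hG i) hxM
    rwa [Fintype.card_fin] at this
  let t : Fin (p + 1) → ℤ := fun i => B + 1 + (U *ᵥ x) i
  have ht : ∀ i, 1 ≤ t i ∧ t i ≤ 2 * B + 1 := fun i => by
    have := abs_le.1 (hUx i)
    constructor <;> simp only [t] <;> omega
  have ht_toNat : ∀ i, ((t i).toNat : ℤ) = t i := fun i =>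
    Int.toNat_of_nonneg (by linarith [ht i])
  refine ⟨fun i => (t i).toNat, fun i => ?_, ?_, fun i k hik => ?_⟩
  · rw [mem_Icc, ← Nat.cast_le (α := ℤ), ← Nat.cast_le (α := ℤ), ht_toNat]
    push_cast
    exact ht i
  · have htsum : ∑ i, γ i * t i = 0 := calc
      ∑ i, γ i * t i = (∑ i, γ i) * (B + 1) + γ ⬝ᵥ (U *ᵥ x) := by
        simp [t, mul_add, sum_add_distrib, sum_mul, dotProduct]
      _ = 0 := by rw [dotProduct_mulVec, vecMul_kerMatrix, hsum]; simp
    simpa [ht_toNat] using htsum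
  · by_contra hne
    refine hx (i, k) (mem_offDiag.2 ⟨mem_univ _, mem_univ _, hne⟩) ?_
    have hik : ((d * (t i).toNat + e) * w i : ℤ) = (d * (t k).toNat + e) * w k := by
      exact_mod_cast hik
    rw [ht_toNat, ht_toNat] at hik
    simp only [v, C, t, smul_dotProduct, sub_dotProduct, smul_eq_mul] at hik ⊢
    simp only [mulVec] at hik
    linear_combination hik

theorem stmt_5_general (n r : ℕ) (hn : 3 ≤ n) (a : Fin n → ℤ) (ha : ∀ i, a i ≠ 0)
    (hreg : ∀ c : ℕ → Fin r, ∃ x : Fin n → ℕ, (∀ i, 0 < x i) ∧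
      (∀ i j, c (x i) = c (x j)) ∧ ∑ i, a i * (x i : ℤ) = 0)
    (c : ℕ → Fin r) :
    ∃ x : Fin n → ℕ, (∀ i, 0 < x i) ∧ (∀ i j, c (x i) = c (x j)) ∧
      (∑ i, a i * (x i : ℤ) = 0) ∧ Function.Injective x := by
  obtain ⟨p, rfl⟩ : ∃ p, n = p + 1 := ⟨n - 1, by omega⟩
  obtain ⟨N, hN⟩ := exists_bound_of_forall_coloring
    (fun x : Fin (p + 1) → ℕ => (∀ i, 0 < x i) ∧ ∑ i, a i * (x i : ℤ) = 0)
    fun c => (hreg c).imp fun _ ⟨hpos, hmono, hsum⟩ => ⟨⟨hpos, hsum⟩, hmono⟩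
  set G := N * ∑ i, (a i).natAbs
  obtain ⟨w, ⟨hwpos, hwsum⟩, hwN, d, hd, e, hmono⟩ :=
    exists_dilated_mono_of_bounded _ hN (Icc 1 (2 * (p * (G * (p + 1) ^ 2)) + 1)) c
  have hγG : ∀ i, |a i * w i| ≤ G := fun i => by
    rw [abs_mul, Nat.abs_cast, mul_comm]
    push_cast [G, Int.natCast_natAbs]
    exact mul_le_mul (by exact_mod_cast hwN i)
      (single_le_sum (fun j _ => abs_nonneg (a j)) (mem_univ i)) (abs_nonneg _) (by positivity)
  obtain ⟨s, hsL, hssum, hsinj⟩ := exists_solution_injective_dilation (by omega)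
    (fun i => mul_ne_zero (ha i) (by exact_mod_cast (hwpos i).ne')) hwsum hγG hwpos hd e
  refine ⟨fun i => (d * s i + e) * w i, fun i => ?_, fun i j => hmono _ (hsL i) _ (hsL j) i j,
    ?_, hsinj⟩
  · have := (mem_Icc.1 (hsL i)).1
    exact Nat.mul_pos (by positivity) (hwpos i)
  · calc ∑ i, a i * (((d * s i + e) * w i : ℕ) : ℤ)
        = d * ∑ i, a i * w i * s i + e * ∑ i, a i * w i := by
          push_cast
          simp only [mul_sum, ← sum_add_distrib]
          exact sum_congr rfl fun i _ => by ring
      _ = 0 := by rw [hssum, hwsum]; simp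

/-- Corollary: an r-regular equation has monochromatic solutions with pairwise
distinct coordinates, provided no two coordinates are forced equal. -/
theorem stmt_5 (n r : ℕ) (hn : 3 ≤ n) (a : Fin n → ℤ) (ha : ∀ i, a i ≠ 0)
    (hreg : ∀ c : ℕ → Fin r, ∃ x : Fin n → ℕ, (∀ i, 0 < x i) ∧
      (∀ i j, c (x i) = c (x j)) ∧ ∑ i, a i * (x i : ℤ) = 0)
    (hpair : ∀ i j : Fin n, i ≠ j →
      ¬ ∃ q : ℚ, ∀ l : Fin n,
        (if l = i then (1 : ℚ) else if l = j then -1 else 0) = q * (a l : ℚ))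
    (c : ℕ → Fin r) :
    ∃ x : Fin n → ℕ, (∀ i, 0 < x i) ∧ (∀ i j, c (x i) = c (x j)) ∧
      (∑ i, a i * (x i : ℤ) = 0) ∧ Function.Injective x :=
  stmt_5_general n r hn a ha hreg c
end

section
/- For every integer n ≥ 2, the equation (1 - Σ_{i=1}^{n-1} 2^i/(2^i - 1))·x_1 + Σ_{i=1}^{n-1} (2^i/(2^i - 1))·x_{i+1} = 0 is (n-1)-regular; that is, every (n-1)-coloring of the positive integers admits a monochromatic positive-integer solution (x_1,...,x_n). -/
/-!
By pigeonhole, two of the powers `2^0, …, 2^(n-1)` share a colour, say `2^j` and `2^k` with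
`j < k`. Putting `x_{i₀+1} = 2^j` for `i₀ = k - j` and every other variable equal to `2^k`
solves the equation, since a vector that is constant `y` off the coordinate `i₀ + 1` solves it
exactly when `y + a_{i₀} (x_{i₀+1} - y) = 0`, and `a = r / (r - 1)` with `r = 2^{i₀}` makes
`y = r x_{i₀+1}` work.
-/

theorem exists_lt_lt_map_eq_of_card_lt {α : Type*} [Fintype α] (f : ℕ → α) {n : ℕ}
    (hn : Fintype.card α < n) : ∃ j k, j < k ∧ k < n ∧ f j = f k := by
  obtain ⟨a, b, hab, hf⟩ :=
    Fintype.exists_ne_map_eq_of_card_lt (fun m : Fin n => f m) (by simpa using hn)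
  rcases Fin.lt_or_lt_of_ne hab with h | h
  · exact ⟨a, b, h, b.isLt, hf⟩
  · exact ⟨b, a, h, a.isLt, hf.symm⟩

theorem Finset.sum_mul_eq_of_eq_off {ι K : Type*} [DecidableEq ι] [CommRing K] {s : Finset ι}
    {i₀ : ι} (h : i₀ ∈ s) (a w : ι → K) {y : K} (hw : ∀ i ∈ s, i ≠ i₀ → w i = y) :
    ∑ i ∈ s, a i * w i = (∑ i ∈ s, a i) * y + a i₀ * (w i₀ - y) := by
  have hrest : ∑ i ∈ s.erase i₀, a i * w i = (∑ i ∈ s.erase i₀, a i) * y := by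
    rw [Finset.sum_mul]
    exact Finset.sum_congr rfl fun i hi ↦ by
      rw [hw i (Finset.mem_of_mem_erase hi) (Finset.ne_of_mem_erase hi)]
  rw [← Finset.add_sum_erase _ _ h, ← Finset.add_sum_erase _ _ h, hrest]
  ring

theorem div_sub_one_mul_sub_mul_add_mul {K : Type*} [Field K] {r : K} (hr : r ≠ 1) (z : K) :
    r / (r - 1) * (z - r * z) + r * z = 0 := by
  have : r - 1 ≠ 0 := sub_ne_zero.mpr hr
  field_simp
  ring

/-- Alexeev–Tsimerman: the equation is (n-1)-regular. Variables are indexed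
1 through n. -/
theorem stmt_6 (n : ℕ) (hn : 2 ≤ n) (c : ℕ → Fin (n - 1)) :
    ∃ x : ℕ → ℕ, (∀ i ∈ Finset.Icc 1 n, 0 < x i) ∧
      (∀ i ∈ Finset.Icc 1 n, ∀ j ∈ Finset.Icc 1 n, c (x i) = c (x j)) ∧
      (1 - ∑ i ∈ Finset.Icc 1 (n - 1), (2 ^ i : ℚ) / (2 ^ i - 1)) * (x 1 : ℚ)
        + ∑ i ∈ Finset.Icc 1 (n - 1), ((2 ^ i : ℚ) / (2 ^ i - 1)) * (x (i + 1) : ℚ)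
        = 0 := by
  obtain ⟨j, k, hjk, hkn, hc⟩ :=
    exists_lt_lt_map_eq_of_card_lt (fun m ↦ c (2 ^ m)) (n := n) (by simp; omega)
  obtain ⟨i₀, hi₀_pos, rfl⟩ : ∃ i₀, 0 < i₀ ∧ k = j + i₀ := ⟨k - j, by omega, by omega⟩
  set x : ℕ → ℕ := Function.update (fun _ ↦ 2 ^ (j + i₀)) (i₀ + 1) (2 ^ j) with hx
  have hx_color : ∀ i, c (x i) = c (2 ^ (j + i₀)) := fun i ↦ by
    rcases eq_or_ne i (i₀ + 1) with rfl | h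
    · simpa [hx] using hc
    · simp [hx, h]
  refine ⟨x, fun i _ ↦ ?_, fun i _ i' _ ↦ by rw [hx_color, hx_color], ?_⟩
  · rw [hx, Function.update_apply]
    split_ifs <;> positivity
  have hi₀ : i₀ ∈ Finset.Icc 1 (n - 1) := Finset.mem_Icc.mpr ⟨hi₀_pos, by omega⟩
  rw [Finset.sum_mul_eq_of_eq_off hi₀ _ (fun i ↦ (x (i + 1) : ℚ)) (y := 2 ^ (j + i₀))
    (fun i _ h ↦ by simp [hx, h])]
  have hx₁ : x 1 = 2 ^ (j + i₀) := Function.update_of_ne (by omega) _ _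
  have hx₂ : x (i₀ + 1) = 2 ^ j := Function.update_self _ _ _
  have hr : (2 : ℚ) ^ i₀ ≠ 1 := (one_lt_pow₀ one_lt_two hi₀_pos.ne').ne'
  rw [hx₁, hx₂]
  push_cast
  linear_combination div_sub_one_mul_sub_mul_add_mul hr (2 ^ j : ℚ)
end

section
/- Let a_1,...,a_n be nonzero integers and define S_l = -((Σ_i a_i) - a_l)/a_l for 1 ≤ l ≤ n. Suppose there exists an m×m upper triangular matrix S = (S_{l_{i,j}}) whose entries on and above the diagonal are each equal to some positive S_l, and which has the linkage property: S_{l_{1,i}}·S_{l_{i+1,j}} = S_{l_{1,j}} for all 1 ≤ i < j ≤ m. Then the equation a_1x_1 + ... + a_nx_n = 0 is m-regular. -/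
/-!
A monochromatic pair `y`, `z = S_l * y` yields a monochromatic solution: put `x_l = z` and all
other `x_i = y`, since `a_l S_l = -(∑ a_i - a_l)`. By linkage, the ratios of the `m + 1` numbers
`1, S_{l_{1,1}}, …, S_{l_{1,m}}` are all entries `S_{l_{i+1,j}}` of the matrix. Scaling these
positive rationals to positive integers, two of them share a colour by pigeonhole, and their
ratio is one of the `S_l`.
-/

open Finset

lemma sum_mul_update_const {ι R : Type*} [Fintype ι] [DecidableEq ι] [CommRing R]
    (a : ι → R) (l : ι) (y z : R) :
    ∑ i, a i * Function.update (fun _ => y) l z i = (∑ i, a i - a l) * y + a l * z := by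
  calc ∑ i, a i * Function.update (fun _ => y) l z i
      = ∑ i, (a i * y + if i = l then a i * (z - y) else 0) := by
        refine sum_congr rfl fun i _ => ?_
        rw [Function.update_apply]
        split_ifs <;> ring
    _ = (∑ i, a i - a l) * y + a l * z := by
        rw [sum_add_distrib, sum_ite_eq', ← sum_mul, if_pos (mem_univ l)]
        ring

lemma exists_monochromatic_solution_of_forbidden_ratio {ι κ : Type*} [Fintype ι]
    [DecidableEq ι] (a : ι → ℤ) (c : ℕ → κ) {l : ι} (hal : a l ≠ 0) {y z : ℕ} (hy : 0 < y)
    (hz : 0 < z) (hc : c y = c z)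
    (hzy : (z : ℚ) = -(((∑ i, a i : ℤ) : ℚ) - a l) / a l * y) :
    ∃ x : ι → ℕ, (∀ i, 0 < x i) ∧ (∀ i j, c (x i) = c (x j)) ∧ ∑ i, a i * (x i : ℤ) = 0 := by
  have hal' : (a l : ℚ) ≠ 0 := Int.cast_ne_zero.mpr hal
  have hlin : a l * (z : ℤ) = -(∑ i, a i - a l) * y := by
    have : (a l : ℚ) * z = -(((∑ i, a i : ℤ) : ℚ) - a l) * y := by
      rw [hzy]; field_simp
    exact_mod_cast this
  have hcol : ∀ i, c (Function.update (fun _ => y) l z i) = c y := by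
    intro i
    rw [Function.update_apply]
    split_ifs <;> simp [hc]
  refine ⟨Function.update (fun _ => y) l z, fun i => ?_, fun i j => by rw [hcol, hcol], ?_⟩
  · rw [Function.update_apply]
    split_ifs <;> assumption
  · calc ∑ i, a i * ((Function.update (fun _ => y) l z i : ℕ) : ℤ)
        = ∑ i, a i * Function.update (fun _ => (y : ℤ)) l (z : ℤ) i := by
          refine sum_congr rfl fun i _ => ?_
          rw [Function.update_apply, Function.update_apply]
          split_ifs <;> rfl
      _ = (∑ i, a i - a l) * y + a l * z := sum_mul_update_const a l _ _
      _ = 0 := by linear_combination hlin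

lemma exists_pos_nat_scaling {ι : Type*} [Fintype ι] (q : ι → ℚ) (hq : ∀ i, 0 < q i) :
    ∃ N : ℕ, ∀ i, ∃ Y : ℕ, 0 < Y ∧ (Y : ℚ) = q i * N := by
  refine ⟨∏ i, (q i).den, fun i => ?_⟩
  obtain ⟨t, ht⟩ := dvd_prod_of_mem (fun i => (q i).den) (mem_univ i)
  obtain ⟨k, hk⟩ : ∃ k : ℤ, (k : ℚ) = q i * ((∏ i, (q i).den : ℕ) : ℚ) :=
    ⟨(q i).num * t, by rw [ht]; push_cast; rw [← mul_assoc, Rat.mul_den_eq_num]⟩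
  have hkpos : 0 < k := by
    have : (0 : ℚ) < k := hk ▸ mul_pos (hq i) (by positivity)
    exact_mod_cast this
  lift k to ℕ using hkpos.le
  exact ⟨k, by exact_mod_cast hkpos, by exact_mod_cast hk⟩

lemma exists_lt_map_eq_of_card_lt {α β : Type*} [LinearOrder α] [Fintype α] [Fintype β]
    (f : α → β) (h : Fintype.card β < Fintype.card α) : ∃ i j, i < j ∧ f i = f j := by
  obtain ⟨i, j, hne, hij⟩ := Fintype.exists_ne_map_eq_of_card_lt f h
  rcases hne.lt_or_gt with hlt | hlt
  · exact ⟨i, j, hlt, hij⟩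
  · exact ⟨j, i, hlt, hij.symm⟩

lemma exists_monochromatic_scaled_pair {m : ℕ} (c : ℕ → Fin m) (q : Fin (m + 1) → ℚ)
    (hq : ∀ j, 0 < q j) :
    ∃ i j, i < j ∧ ∃ y z : ℕ, 0 < y ∧ 0 < z ∧ c y = c z ∧ (z : ℚ) * q i = q j * y := by
  obtain ⟨N, hY⟩ := exists_pos_nat_scaling q hq
  choose Y hYpos hYval using hY
  obtain ⟨i, j, hij, hc⟩ := exists_lt_map_eq_of_card_lt (c ∘ Y) (by simp)
  exact ⟨i, j, hij, Y i, Y j, hYpos i, hYpos j, hc, by rw [hYval, hYval]; ring⟩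

def firstRowChain {m : ℕ} {ι M : Type*} [One M] (hm : 0 < m) (S : ι → M)
    (L : Fin m → Fin m → ι) : Fin (m + 1) → M :=
  Fin.cons 1 fun j => S (L ⟨0, hm⟩ j)

lemma firstRowChain_ratio {m : ℕ} {ι M : Type*} [CommMonoid M] (hm : 0 < m) (S : ι → M)
    (L : Fin m → Fin m → ι)
    (hlink : ∀ i j : Fin m, ∀ (hij : i < j),
      S (L ⟨0, hm⟩ i) * S (L ⟨i.1 + 1, Nat.lt_of_le_of_lt hij j.2⟩ j) = S (L ⟨0, hm⟩ j))
    {i j : Fin (m + 1)} (hij : i < j) :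
    ∃ l, firstRowChain hm S L j = S l * firstRowChain hm S L i := by
  induction j using Fin.cases with
  | zero => exact absurd hij (Fin.not_lt_zero i)
  | succ j =>
    induction i using Fin.cases with
    | zero => exact ⟨L ⟨0, hm⟩ j, by simp [firstRowChain]⟩
    | succ i =>
      have hij' : i < j := Fin.succ_lt_succ_iff.mp hij
      refine ⟨L ⟨i.1 + 1, Nat.lt_of_le_of_lt hij' j.2⟩ j, ?_⟩
      simp only [firstRowChain, Fin.cons_succ]
      rw [← hlink i j hij', mul_comm]

/-- Theorem 3: an upper triangular matrix of positive forbidden ratios with the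
linkage property implies m-regularity. -/
theorem stmt_8 (n m : ℕ) (hm : 0 < m) (a : Fin n → ℤ) (ha : ∀ i, a i ≠ 0)
    (S : Fin n → ℚ) (hSdef : ∀ l, S l = -(((∑ i, a i : ℤ) : ℚ) - (a l : ℚ)) / (a l : ℚ))
    (L : Fin m → Fin m → Fin n)
    (hpos : ∀ i j : Fin m, i ≤ j → 0 < S (L i j))
    (hlink : ∀ i j : Fin m, ∀ (hij : i < j),
      S (L ⟨0, hm⟩ i) * S (L ⟨i.1 + 1, Nat.lt_of_le_of_lt hij j.2⟩ j) = S (L ⟨0, hm⟩ j)) :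
    ∀ c : ℕ → Fin m, ∃ x : Fin n → ℕ, (∀ i, 0 < x i) ∧
      (∀ i j, c (x i) = c (x j)) ∧ ∑ i, a i * (x i : ℤ) = 0 := by
  intro c
  have hchain_pos : ∀ j, 0 < firstRowChain hm S L j :=
    Fin.cases (by simp [firstRowChain]) fun j => hpos _ j (Fin.le_iff_val_le_val.mpr j.val.zero_le)
  obtain ⟨i, j, hij, y, z, hy, hz, hc, hzy⟩ :=
    exists_monochromatic_scaled_pair c (firstRowChain hm S L) hchain_pos
  obtain ⟨l, hl⟩ := firstRowChain_ratio hm S L hlink hij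
  refine exists_monochromatic_solution_of_forbidden_ratio a c (ha l) hy hz hc ?_
  rw [← hSdef l]
  rw [hl, mul_right_comm] at hzy
  exact mul_right_cancel₀ (hchain_pos i).ne' hzy
end

section
/- Let k and n ≥ 2 be positive integers and a_1,...,a_n nonzero integers. Then there exist integers λ_1,...,λ_n with a_1λ_1+...+a_nλ_n = 0, each λ_1,...,λ_{n-1} chosen from {a_n, 2a_n, ..., (k+1)a_n}, and |λ_n| ≤ (k+1)(|a_1|+...+|a_{n-1}|), such that for any k given affine conditions A_{j,1}λ_1+...+A_{j,n}λ_n = b_j (1 ≤ j ≤ k) with no (A_{j,1},...,A_{j,n}) a rational multiple of (a_1,...,a_n), all k conditions fail. -/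
/-!
Put `λᵢ = tᵢ aₙ` for `i < n` and `λₙ = -∑ aᵢ tᵢ`, so that `∑ aᵢ λᵢ = 0` holds
identically. In the variables `t` the `j`-th condition reads
`∑ (A_{j,i} aₙ - A_{j,n} aᵢ) tᵢ = b_j`, a genuine hyperplane because `A_j` is not
proportional to `a`. A hyperplane `∑ cᵢ tᵢ = d` with `c_{i₀} ≠ 0` meets the box
`{1, …, k+1}^{n-1}` in at most `(k+1)^{n-2}` points (the other coordinates determine
`t_{i₀}`), so the `k` hyperplanes cannot cover the box.
-/

open Finset

section Avoidance

variable {ι R : Type*} [Fintype ι] [DecidableEq ι] [Ring R] [NoZeroDivisors R]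

theorem eq_of_sum_mul_eq_of_forall_ne {c x y : ι → R} {i₀ : ι}
    (hc : c i₀ ≠ 0) (hsum : ∑ i, c i * x i = ∑ i, c i * y i)
    (hne : ∀ i, i ≠ i₀ → x i = y i) : x = y := by
  have hrest : ∑ i ∈ univ.erase i₀, c i * x i = ∑ i ∈ univ.erase i₀, c i * y i :=
    sum_congr rfl fun i hi => by rw [hne i (ne_of_mem_erase hi)]
  rw [← add_sum_erase _ _ (mem_univ i₀), ← add_sum_erase _ _ (mem_univ i₀), hrest,
    add_left_inj] at hsum
  funext i
  by_cases hi : i = i₀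
  · subst hi; exact mul_left_cancel₀ hc hsum
  · exact hne i hi

/-- Resetting the `i₀`-th coordinate embeds (hyperplane ∩ box) × `s` into the box. -/
theorem card_filter_sum_mul_eq_mul_card_le [DecidableEq R] {c : ι → R} {i₀ : ι}
    (hc : c i₀ ≠ 0) (d : R) (s : Finset R) :
    #{x ∈ Fintype.piFinset fun _ => s | ∑ i, c i * x i = d} * #s ≤
      #(Fintype.piFinset fun _ : ι => s) := by
  rw [← card_product]
  refine card_le_card_of_injOn (fun p => Function.update p.1 i₀ p.2) ?_ ?_
  · rintro ⟨x, y⟩ hxy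
    simp only [coe_product, Set.mem_prod, mem_coe, mem_filter, Fintype.mem_piFinset] at hxy ⊢
    intro i
    by_cases hi : i = i₀
    · subst hi; simpa using hxy.2
    · simpa [hi] using hxy.1.1 i
  · rintro ⟨x, y⟩ hxy ⟨x', y'⟩ hxy' h
    simp only [coe_product, Set.mem_prod, mem_coe, mem_filter] at hxy hxy' h
    have hne : ∀ i, i ≠ i₀ → x i = x' i := fun i hi => by
      simpa [Function.update_of_ne hi] using congrFun h i
    have hy : y = y' := by simpa using congrFun h i₀
    rw [eq_of_sum_mul_eq_of_forall_ne hc (hxy.1.2.trans hxy'.1.2.symm) hne, hy]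

theorem exists_mem_piFinset_forall_sum_mul_ne {J : Type*} [Fintype J] (c : J → ι → R)
    (hc : ∀ j, c j ≠ 0) (d : J → R) (s : Finset R) (hs : Fintype.card J < #s) :
    ∃ x ∈ Fintype.piFinset fun _ => s, ∀ j, ∑ i, c j i * x i ≠ d j := by
  classical
  by_contra! hbad
  have hcover : (Fintype.piFinset fun _ : ι => s) ⊆
      univ.biUnion fun j => {x ∈ Fintype.piFinset fun _ => s | ∑ i, c j i * x i = d j} := by
    intro x hx
    obtain ⟨j, hj⟩ := hbad x hx
    exact mem_biUnion.mpr ⟨j, mem_univ j, mem_filter.mpr ⟨hx, hj⟩⟩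
  have hpos : 0 < #(Fintype.piFinset fun _ : ι => s) := by
    rw [Fintype.card_piFinset]; exact prod_pos fun _ _ => by omega
  have : #(Fintype.piFinset fun _ : ι => s) * #s ≤
      Fintype.card J * #(Fintype.piFinset fun _ : ι => s) :=
    calc #(Fintype.piFinset fun _ : ι => s) * #s
      _ ≤ (∑ j, #{x ∈ Fintype.piFinset fun _ => s | ∑ i, c j i * x i = d j}) * #s :=
          Nat.mul_le_mul_right _ ((card_le_card hcover).trans card_biUnion_le)
      _ ≤ ∑ _j : J, #(Fintype.piFinset fun _ : ι => s) := by
          rw [sum_mul]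
          refine sum_le_sum fun j _ => ?_
          obtain ⟨i₀, hi₀⟩ := Function.ne_iff.mp (hc j)
          exact card_filter_sum_mul_eq_mul_card_le hi₀ (d j) s
      _ = Fintype.card J * #(Fintype.piFinset fun _ : ι => s) := by simp
  rw [mul_comm] at this
  exact absurd (Nat.le_of_mul_le_mul_right this hpos) (not_le.mpr hs)

end Avoidance

section Perturbation

variable {m : ℕ} {R : Type*} [CommRing R]

def perturb (a : Fin (m + 1) → R) (t : Fin m → R) : Fin (m + 1) → R :=
  Fin.snoc (α := fun _ => R) (fun i => t i * a (Fin.last m)) (-∑ i, a i.castSucc * t i)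

@[simp]
theorem perturb_castSucc (a : Fin (m + 1) → R) (t : Fin m → R) (i : Fin m) :
    perturb a t i.castSucc = t i * a (Fin.last m) :=
  Fin.snoc_castSucc (α := fun _ => R) _ _ i

@[simp]
theorem perturb_last (a : Fin (m + 1) → R) (t : Fin m → R) :
    perturb a t (Fin.last m) = -∑ i, a i.castSucc * t i :=
  Fin.snoc_last (α := fun _ => R) _ _

theorem sum_mul_perturb_eq (a v : Fin (m + 1) → R) (t : Fin m → R) :
    ∑ i, v i * perturb a t i =
      ∑ i, (v i.castSucc * a (Fin.last m) - v (Fin.last m) * a i.castSucc) * t i := by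
  simp only [Fin.sum_univ_castSucc, perturb_castSucc, perturb_last]
  rw [mul_neg, mul_sum, ← sub_eq_add_neg, ← sum_sub_distrib]
  exact sum_congr rfl fun i _ => by ring

theorem sum_mul_perturb (a : Fin (m + 1) → R) (t : Fin m → R) :
    ∑ i, a i * perturb a t i = 0 := by
  simp [sum_mul_perturb_eq, mul_comm]

theorem abs_perturb_last_le [LinearOrder R] [IsStrictOrderedRing R]
    (a : Fin (m + 1) → R) {t : Fin m → R} {B : R} (ht : ∀ i, |t i| ≤ B) :
    |perturb a t (Fin.last m)| ≤ B * ∑ i : Fin m, |a i.castSucc| := by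
  rw [perturb_last, abs_neg, mul_sum]
  refine (abs_sum_le_sum_abs _ _).trans (sum_le_sum fun i _ => ?_)
  rw [abs_mul, mul_comm]
  exact mul_le_mul_of_nonneg_right (ht i) (abs_nonneg _)

theorem exists_rat_mul_of_cross_eq_zero (a v : Fin (m + 1) → ℤ) (ha : a (Fin.last m) ≠ 0)
    (h : ∀ i : Fin m, v i.castSucc * a (Fin.last m) - v (Fin.last m) * a i.castSucc = 0) :
    ∃ q : ℚ, ∀ i, (v i : ℚ) = q * a i := by
  have ha' : (a (Fin.last m) : ℚ) ≠ 0 := by exact_mod_cast ha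
  refine ⟨v (Fin.last m) / a (Fin.last m), Fin.lastCases ?_ fun i => ?_⟩
  · field_simp
  · have hi : (v i.castSucc : ℚ) * a (Fin.last m) = v (Fin.last m) * a i.castSucc := by
      exact_mod_cast sub_eq_zero.mp (h i)
    field_simp
    exact hi

end Perturbation

theorem sum_filter_val_lt_eq_sum_castSucc {M : Type*} [AddCommMonoid M] {m : ℕ}
    (f : Fin (m + 1) → M) :
    ∑ i ∈ univ.filter (fun i : Fin (m + 1) => (i : ℕ) < m), f i =
      ∑ i : Fin m, f (Fin.castSucc i) := by
  simp [sum_filter, Fin.sum_univ_castSucc]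

/-- Quantitative bound from the proof of Theorem 2: a bounded perturbation vector
in the kernel avoiding the k given affine hyperplanes. -/
theorem stmt_12 (n k : ℕ) (hn : 2 ≤ n) (a : Fin n → ℤ) (ha : ∀ i, a i ≠ 0)
    (A : Fin k → Fin n → ℤ)
    (hA : ∀ j, ¬ ∃ q : ℚ, ∀ i, (A j i : ℚ) = q * (a i : ℚ))
    (b : Fin k → ℚ) :
    ∃ l : Fin n → ℤ,
      (∑ i, a i * l i = 0) ∧
      (∀ i : Fin n, (i : ℕ) < n - 1 → ∃ t : ℕ, 1 ≤ t ∧ t ≤ k + 1 ∧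
        l i = (t : ℤ) * a ⟨n - 1, by omega⟩) ∧
      |l ⟨n - 1, by omega⟩| ≤ (k + 1) *
        ∑ i ∈ Finset.univ.filter (fun i : Fin n => (i : ℕ) < n - 1), |a i| ∧
      ∀ j, ∑ i, (A j i : ℚ) * (l i : ℚ) ≠ b j := by
  obtain ⟨m, rfl⟩ : ∃ m, n = m + 1 := ⟨n - 1, by omega⟩
  simp only [Nat.add_sub_cancel]
  set cross : Fin k → Fin m → ℤ := fun j i =>
    A j i.castSucc * a (Fin.last m) - A j (Fin.last m) * a i.castSucc
  have hcross : ∀ j, (fun i => (cross j i : ℚ)) ≠ 0 := fun j hj =>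
    hA j (exists_rat_mul_of_cross_eq_zero a (A j) (ha _) fun i =>
      Int.cast_eq_zero.mp (congrFun hj i))
  obtain ⟨x, hx, hxb⟩ := exists_mem_piFinset_forall_sum_mul_ne _ hcross b
    ((Icc 1 (k + 1)).image (Nat.cast : ℕ → ℚ))
    (by rw [card_image_of_injective _ Nat.cast_injective]; simp)
  choose t ht htx using fun i => mem_image.mp (Fintype.mem_piFinset.mp hx i)
  simp only [mem_Icc] at ht
  refine ⟨perturb a fun i => (t i : ℤ), sum_mul_perturb _ _, fun i hi => ?_, ?_, fun j => ?_⟩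
  · exact ⟨t (i.castLT hi), (ht _).1, (ht _).2, perturb_castSucc _ _ (i.castLT hi)⟩
  · rw [sum_filter_val_lt_eq_sum_castSucc]
    refine abs_perturb_last_le a fun i => ?_
    rw [Int.abs_natCast]; exact_mod_cast (ht i).2
  · have hsum : ∑ i, (A j i : ℚ) * ((perturb a (fun i => (t i : ℤ)) i : ℤ) : ℚ) =
        ∑ i, (cross j i : ℚ) * x i := by
      simp only [← htx]
      exact_mod_cast congrArg (Int.cast : ℤ → ℚ)
        (sum_mul_perturb_eq a (A j) fun i => (t i : ℤ))
    rw [hsum]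
    exact hxb j
end

section
/- Suppose a coloring c of the positive integers with m colors avoids monochromatic solutions to a_1x_1+...+a_nx_n = 0, and suppose S is an m×m upper triangular matrix of positive forbidden ratios with the linkage property S_{l_{1,i}}·S_{l_{i+1,j}} = S_{l_{1,j}} for 1 ≤ i < j ≤ m. Then for any positive integer x such that all products S_{l_{i,j}}·x and S_{l_{1,i}}·x are positive integers, and for every t with 2 ≤ t ≤ m, after relabeling colors so that c(x)=1 and c(S_{l_{1,i-1}}x) = i for 2 ≤ i ≤ t, the colors c(S_{l_{1,j}}x) for t-1 ≤ j ≤ m all lie in {t,...,m}. -/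
lemma stmt15_key (n m : ℕ) (a : Fin n → ℤ) (ha : ∀ i, a i ≠ 0)
    (S : Fin n → ℚ) (hSdef : ∀ l, S l = -(((∑ i, a i : ℤ) : ℚ) - (a l : ℚ)) / (a l : ℚ))
    (c : ℕ → Fin m)
    (hfree : ∀ x : Fin n → ℕ, (∀ i, 0 < x i) → (∀ i j, c (x i) = c (x j)) →
      ∑ i, a i * (x i : ℤ) ≠ 0)
    (l : Fin n) (b z : ℕ) (hb : 0 < b) (hz : 0 < z)
    (hzq : (z : ℚ) = S l * b) (hc : c b = c z) : False := by
  refine hfree (fun i => if i = l then z else b) (fun i => by positivity) ?_ ?_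
  · intro i j
    by_cases hi : i = l <;> by_cases hj : j = l <;> simp [hi, hj, hc]
  · have hal : (a l : ℚ) ≠ 0 := by exact_mod_cast ha l
    have h : ((∑ i, a i * (((fun i => if i = l then z else b) i : ℕ) : ℤ)) : ℚ) = 0 := by
      push_cast
      have : ∀ i ∈ Finset.univ, (a i : ℚ) * (if i = l then (z:ℚ) else (b:ℚ)) =
          (a i : ℚ) * b + (if i = l then (a l : ℚ) * ((z:ℚ) - b) else 0) := by
        intro i _
        by_cases h : i = l <;> simp [h] <;> ring
      rw [Finset.sum_congr rfl this, Finset.sum_add_distrib, Finset.sum_ite_eq' Finset.univ l]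
      simp only [Finset.mem_univ, if_true]
      rw [hzq, hSdef l]
      rw [← Finset.sum_mul]
      push_cast
      field_simp
      ring
    exact_mod_cast h

/-- Inductive step in the proof of Theorem 3: after relabeling colors, the colors
of the first-row products S_{l_{1,j}}·x with t-1 ≤ j ≤ m all lie in {t, ..., m}
(zero-indexed: have value at least t - 1). -/
theorem stmt_15 (n m : ℕ) (hm : 0 < m) (a : Fin n → ℤ) (ha : ∀ i, a i ≠ 0)
    (S : Fin n → ℚ) (hSdef : ∀ l, S l = -(((∑ i, a i : ℤ) : ℚ) - (a l : ℚ)) / (a l : ℚ))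
    (L : Fin m → Fin m → Fin n)
    (hpos : ∀ i j : Fin m, i ≤ j → 0 < S (L i j))
    (hlink : ∀ i j : Fin m, ∀ (hij : i < j),
      S (L ⟨0, hm⟩ i) * S (L ⟨i.1 + 1, Nat.lt_of_le_of_lt hij j.2⟩ j) = S (L ⟨0, hm⟩ j))
    (c : ℕ → Fin m)
    (hfree : ∀ x : Fin n → ℕ, (∀ i, 0 < x i) → (∀ i j, c (x i) = c (x j)) →
      ∑ i, a i * (x i : ℤ) ≠ 0)
    (x : ℕ) (hx : 0 < x)
    (y : Fin m → Fin m → ℕ)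
    (hy : ∀ i j : Fin m, i ≤ j → 0 < y i j ∧ (y i j : ℚ) = S (L i j) * x)
    (t : ℕ) (ht2 : 2 ≤ t) (htm : t ≤ m)
    (hcx : (c x : ℕ) = 0)
    (hrel : ∀ i : ℕ, ∀ (_ : 1 ≤ i) (hi : i ≤ t - 1),
      (c (y ⟨0, hm⟩ ⟨i - 1, by omega⟩) : ℕ) = i) :
    ∀ j : ℕ, ∀ (_ : t - 2 ≤ j) (hj : j < m),
      t - 1 ≤ (c (y ⟨0, hm⟩ ⟨j, hj⟩) : ℕ) := by
  intro j hj1 hj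
  by_contra hcon
  push_neg at hcon
  obtain ⟨k, hk⟩ : ∃ k, (c (y ⟨0, hm⟩ ⟨j, hj⟩) : ℕ) = k := ⟨_, rfl⟩
  rw [hk] at hcon
  -- k < t - 1, so k ≤ t - 2 ≤ j
  have hj0 : (⟨0, hm⟩ : Fin m) ≤ ⟨j, hj⟩ := Nat.zero_le j
  obtain ⟨hzpos, hzq⟩ := hy ⟨0, hm⟩ ⟨j, hj⟩ hj0
  rcases Nat.eq_zero_or_pos k with hk0 | hk1
  · -- c x = c (y 0 j)
    have hc : c x = c (y ⟨0, hm⟩ ⟨j, hj⟩) := Fin.ext (by omega)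
    exact stmt15_key n m a ha S hSdef c hfree (L ⟨0, hm⟩ ⟨j, hj⟩) x _ hx hzpos hzq hc
  · -- 1 ≤ k ≤ t - 2
    have hkt : k ≤ t - 1 := by omega
    have hrk := hrel k hk1 hkt
    have hkm : k < m := by omega
    have hk1m : k - 1 < m := by omega
    have hk1j : k - 1 < j := by omega
    have hlk := hlink ⟨k - 1, hk1m⟩ ⟨j, hj⟩ hk1j
    have hfix : (⟨(k - 1) + 1, Nat.lt_of_le_of_lt hk1j hj⟩ : Fin m) = ⟨k, hkm⟩ :=
      Fin.ext (by simp; omega)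
    rw [hfix] at hlk
    obtain ⟨hbpos, hbq⟩ := hy ⟨0, hm⟩ ⟨k - 1, hk1m⟩ (Nat.zero_le _)
    have hzq' : ((y ⟨0, hm⟩ ⟨j, hj⟩ : ℕ) : ℚ)
        = S (L ⟨k, hkm⟩ ⟨j, hj⟩) * (y ⟨0, hm⟩ ⟨k - 1, hk1m⟩ : ℕ) := by
      rw [hzq, ← hlk, hbq]; ring
    have hrk' : (c (y ⟨0, hm⟩ ⟨k - 1, hk1m⟩) : ℕ) = k := hrk
    have hc : c (y ⟨0, hm⟩ ⟨k - 1, hk1m⟩) = c (y ⟨0, hm⟩ ⟨j, hj⟩) :=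
      Fin.ext (by rw [hrk', ← hk])
    exact stmt15_key n m a ha S hSdef c hfree (L ⟨k, hkm⟩ ⟨j, hj⟩) _ _ hbpos hzpos hzq' hc
end
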